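/- arXiv:quant-ph/0507130 — 2 statements merged into one kernel-verified Lean document; each statement's English description precedes it below -/
import Mathlib

section
/- For each r, s ∈ ZMod d, the linear map T_{r,s} : ℂ^d → ℂ^d ⊗ ℂ^d ⊗ ℂ^d defined by T_{r,s}(ψ) = (1/√d) · (U_{r,s}ᴴ ψ) ⊗ |U_{r,s}⟩⟩ is an isometry (T_{r,s}ᴴ ∘ T_{r,s} = id), and it intertwines the representations: (U_{p,q} ⊗ U_{p,q} ⊗ conj(U_{p,q})) ∘ T_{r,s} = T_{r,s} ∘ U_{p,q} for all p, q ∈ ZMod d. Moreover, for (r,s) ≠ (r',s'), the ranges of T_{r,s} and T_{r',s'} are orthogonal. -/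
open Matrix Kronecker BigOperators

/-- ω = exp(2πi/d). -/
noncomputable def omega (d : ℕ) : ℂ := Complex.exp (2 * Real.pi * Complex.I / d)

/-- The Weyl–Heisenberg matrix `U_{p,q}`. -/
noncomputable def WH (d : ℕ) [NeZero d] (p q : ZMod d) : Matrix (ZMod d) (ZMod d) ℂ :=
  fun j k => if j = k + p then omega d ^ (q.val * k.val) else 0

/-- The isometry `T_{r,s} : ℂ^d → ℂ^d ⊗ ℂ^d ⊗ ℂ^d`, `ψ ↦ (1/√d)·(U_{r,s}ᴴ ψ) ⊗ |U_{r,s}⟩⟩`,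
written as a `d³ × d` matrix: `(T_{r,s})_{(i,j,k),m} = (1/√d)·(U_{r,s}ᴴ)_{i,m}·(U_{r,s})_{j,k}`. -/
noncomputable def Tiso (d : ℕ) [NeZero d] (r s : ZMod d) :
    Matrix (ZMod d × ZMod d × ZMod d) (ZMod d) ℂ :=
  fun x m => (Real.sqrt d : ℂ)⁻¹ * (WH d r s)ᴴ x.1 m * WH d r s x.2.1 x.2.2


/-!
Writing `|W⟩⟩` for a matrix read as a vector, `T_{r,s} = d^{-1/2} · U_{r,s}ᴴ ⊗ |U_{r,s}⟩⟩`, so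
`T_{r,s}ᴴ T_{r',s'} = d⁻¹ · tr(U_{r,s}ᴴ U_{r',s'}) · U_{r,s} U_{r',s'}ᴴ`. The Weyl–Heisenberg
matrices are unitary and trace-orthogonal (a character sum over `ZMod d`), which gives the isometry
and the orthogonality of the ranges. For the intertwining,
`(A ⊗ B ⊗ conj A)(V ⊗ |W⟩⟩) = A V ⊗ |B W Aᴴ⟩⟩`, and the Weyl commutation relation
`U_{p,q} U_{r,s} = χ(qr - sp) U_{r,s} U_{p,q}` (with `χ = ZMod.stdAddChar`) produces the phase
`χ(qr - sp)` on `|U_{r,s}⟩⟩` and `χ(sp - qr)` on `U_{r,s}ᴴ U_{p,q}`, which cancel.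
-/

namespace Matrix

variable {R l m n o : Type*}

/-- The matrix of `ψ ↦ (V ψ) ⊗ |W⟩⟩`, where `|W⟩⟩` is `W` read as a vector indexed by `n × o`. -/
def bellTensor [Mul R] (V : Matrix l m R) (W : Matrix n o R) : Matrix (l × n × o) m R :=
  fun x k => V x.1 k * W x.2.1 x.2.2

section CommSemiring

variable [CommSemiring R]

theorem bellTensor_smul_left (c : R) (V : Matrix l m R) (W : Matrix n o R) :
    bellTensor (c • V) W = c • bellTensor V W := by
  ext x k
  simp [bellTensor, mul_assoc]

theorem bellTensor_smul_right (c : R) (V : Matrix l m R) (W : Matrix n o R) :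
    bellTensor V (c • W) = c • bellTensor V W := by
  ext x k
  simp only [bellTensor, smul_apply, smul_eq_mul]
  ring

theorem bellTensor_mul {p : Type*} [Fintype m] (V : Matrix l m R) (W : Matrix n o R)
    (M : Matrix m p R) :
    bellTensor V W * M = bellTensor (V * M) W := by
  ext x k
  simp only [bellTensor, mul_apply, Finset.sum_mul]
  exact Finset.sum_congr rfl fun _ _ => by ring

theorem kronecker_mul_bellTensor [Fintype l] [Fintype n] [Fintype o] (A : Matrix l l R)
    (B : Matrix n n R) (C : Matrix o o R) (V : Matrix l m R) (W : Matrix n o R) :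
    (A ⊗ₖ (B ⊗ₖ C)) * bellTensor V W = bellTensor (A * V) (B * W * Cᵀ) := by
  ext x k
  simp only [bellTensor, mul_apply, kroneckerMap_apply, transpose_apply, Fintype.sum_prod_type,
    Finset.sum_mul, Finset.mul_sum]
  rw [Finset.sum_comm]
  conv_lhs => enter [2, y]; rw [Finset.sum_comm]
  rw [Finset.sum_comm]
  exact Finset.sum_congr rfl fun _ _ => Finset.sum_congr rfl fun _ _ =>
    Finset.sum_congr rfl fun _ _ => by ring

theorem conjTranspose_bellTensor_mul_bellTensor [Fintype l] [Fintype n] [Fintype o]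
    [StarRing R] (V V' : Matrix l m R) (W W' : Matrix n o R) :
    (bellTensor V W)ᴴ * bellTensor V' W' = (Wᴴ * W').trace • (Vᴴ * V') := by
  ext k k'
  simp only [bellTensor, mul_apply, conjTranspose_apply, trace, diag_apply, smul_apply,
    smul_eq_mul, Fintype.sum_prod_type, star_mul', Finset.sum_mul]
  simp only [Finset.mul_sum]
  rw [Finset.sum_comm]
  conv_lhs => enter [2, y]; rw [Finset.sum_comm]
  rw [Finset.sum_comm]
  exact Finset.sum_congr rfl fun _ _ => Finset.sum_congr rfl fun _ _ =>
    Finset.sum_congr rfl fun _ _ => by ring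

end CommSemiring

end Matrix

open ZMod

section WeylHeisenberg

variable {d : ℕ} [NeZero d]

theorem omega_pow (n : ℕ) : omega d ^ n = stdAddChar (n : ZMod d) := by
  rw [omega, ← Complex.exp_nat_mul, stdAddChar_apply, toCircle_natCast]
  ring_nf

theorem WH_apply (p q j k : ZMod d) :
    WH d p q j k = if j = k + p then stdAddChar (q * k) else 0 := by
  rw [WH, omega_pow]
  push_cast [natCast_val, cast_id]
  rfl

theorem WH_zero_zero : WH d 0 0 = 1 := by
  ext j k
  simp [WH_apply, one_apply]

theorem WH_mul_WH (p q r s : ZMod d) :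
    WH d p q * WH d r s = stdAddChar (q * r) • WH d (p + r) (q + s) := by
  ext j k
  rw [mul_apply, Finset.sum_eq_single (k + r) (fun x _ hx => by simp [WH_apply, hx]) (by simp)]
  have hj : j = k + r + p ↔ j = k + (p + r) := by rw [add_assoc, add_comm r]
  have hχ : stdAddChar (q * (k + r)) * stdAddChar (s * k) =
      stdAddChar (q * r) * stdAddChar ((q + s) * k) := by
    simp only [← AddChar.map_add_eq_mul]
    ring_nf
  simp [WH_apply, hj, hχ]

theorem conjTranspose_WH (p q : ZMod d) :
    (WH d p q)ᴴ = stdAddChar (p * q) • WH d (-p) (-q) := by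
  ext j k
  simp only [conjTranspose_apply, WH_apply, Matrix.smul_apply, smul_eq_mul]
  by_cases h : j = k + -p
  · subst h
    simp only [neg_add_cancel_right, if_true, RCLike.star_def, ← AddChar.map_neg_eq_conj,
      ← AddChar.map_add_eq_mul]
    ring_nf
  · have h' : k ≠ j + p := fun h'' => h (by rw [h'']; ring)
    simp [h, h']

theorem WH_mul_conjTranspose_WH (p q : ZMod d) : WH d p q * (WH d p q)ᴴ = 1 := by
  have hphase : p * q + q * -p = 0 := by ring
  rw [conjTranspose_WH, mul_smul_comm, WH_mul_WH, smul_smul, ← AddChar.map_add_eq_mul, hphase,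
    AddChar.map_zero_eq_one, one_smul, add_neg_cancel, add_neg_cancel, WH_zero_zero]

theorem conjTranspose_WH_mul_WH (p q : ZMod d) : (WH d p q)ᴴ * WH d p q = 1 :=
  mul_eq_one_comm.mp (WH_mul_conjTranspose_WH p q)

theorem WH_mul_WH_comm (p q r s : ZMod d) :
    WH d p q * WH d r s = stdAddChar (q * r - s * p) • (WH d r s * WH d p q) := by
  rw [WH_mul_WH, WH_mul_WH, smul_smul, ← AddChar.map_add_eq_mul, add_comm r, add_comm s]
  ring_nf

theorem trace_WH_of_ne {p q : ZMod d} (h : (p, q) ≠ 0) : (WH d p q).trace = 0 := by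
  classical
  simp only [trace, diag_apply, WH_apply, left_eq_add]
  by_cases hp : p = 0
  · have hq : q ≠ 0 := fun hq => h (by simp [hp, hq])
    simp only [hp, if_true]
    simpa [mul_comm q, hq] using AddChar.sum_mulShift q (isPrimitive_stdAddChar d)
  · simp [hp]

theorem trace_conjTranspose_WH_mul_WH {r s r' s' : ZMod d} (h : (r, s) ≠ (r', s')) :
    ((WH d r s)ᴴ * WH d r' s').trace = 0 := by
  rw [conjTranspose_WH, smul_mul_assoc, WH_mul_WH, trace_smul, trace_smul, trace_WH_of_ne,
    smul_zero, smul_zero]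
  contrapose! h
  simp only [Prod.mk_eq_zero, neg_add_eq_zero] at h
  rw [h.1, h.2]

theorem WH_mul_WH_mul_conjTranspose_WH (p q r s : ZMod d) :
    WH d p q * WH d r s * (WH d p q)ᴴ = stdAddChar (q * r - s * p) • WH d r s := by
  rw [WH_mul_WH_comm, smul_mul_assoc, mul_assoc, WH_mul_conjTranspose_WH, mul_one]

theorem WH_mul_conjTranspose_WH_comm (p q r s : ZMod d) :
    WH d p q * (WH d r s)ᴴ = stdAddChar (-(q * r - s * p)) • ((WH d r s)ᴴ * WH d p q) := by
  rw [conjTranspose_WH, mul_smul_comm, WH_mul_WH_comm, smul_mul_assoc, smul_comm]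
  ring_nf

theorem Tiso_eq_smul_bellTensor (r s : ZMod d) :
    Tiso d r s = (Real.sqrt d : ℂ)⁻¹ • bellTensor (WH d r s)ᴴ (WH d r s) := by
  ext x m
  simp [Tiso, bellTensor, mul_assoc]

theorem conjTranspose_Tiso_mul_Tiso (r s r' s' : ZMod d) :
    (Tiso d r s)ᴴ * Tiso d r' s' =
      ((d : ℂ)⁻¹ * ((WH d r s)ᴴ * WH d r' s').trace) • (WH d r s * (WH d r' s')ᴴ) := by
  have hnorm : star (Real.sqrt d : ℂ)⁻¹ * (Real.sqrt d : ℂ)⁻¹ = (d : ℂ)⁻¹ := by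
    rw [star_inv₀, Complex.star_def, Complex.conj_ofReal, ← mul_inv, ← Complex.ofReal_mul,
      Real.mul_self_sqrt (Nat.cast_nonneg d), Complex.ofReal_natCast]
  rw [Tiso_eq_smul_bellTensor, Tiso_eq_smul_bellTensor, conjTranspose_smul, Matrix.smul_mul,
    Matrix.mul_smul, conjTranspose_bellTensor_mul_bellTensor, conjTranspose_conjTranspose,
    smul_smul, smul_smul, hnorm]

theorem conjTranspose_Tiso_mul_self (r s : ZMod d) : (Tiso d r s)ᴴ * Tiso d r s = 1 := by
  rw [conjTranspose_Tiso_mul_Tiso, conjTranspose_WH_mul_WH, WH_mul_conjTranspose_WH, trace_one,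
    ZMod.card, inv_mul_cancel₀ (Nat.cast_ne_zero.mpr (NeZero.ne d)), one_smul]

theorem conjTranspose_Tiso_mul_Tiso_of_ne {r s r' s' : ZMod d} (h : (r, s) ≠ (r', s')) :
    (Tiso d r s)ᴴ * Tiso d r' s' = 0 := by
  rw [conjTranspose_Tiso_mul_Tiso, trace_conjTranspose_WH_mul_WH h, mul_zero, zero_smul]

theorem kronecker_WH_mul_Tiso (r s p q : ZMod d) :
    (WH d p q ⊗ₖ (WH d p q ⊗ₖ (WH d p q).map (starRingEnd ℂ))) * Tiso d r s =
      Tiso d r s * WH d p q := by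
  have hconj : ((WH d p q).map (starRingEnd ℂ))ᵀ = (WH d p q)ᴴ := rfl
  rw [Tiso_eq_smul_bellTensor, Matrix.mul_smul, kronecker_mul_bellTensor, hconj,
    WH_mul_WH_mul_conjTranspose_WH, WH_mul_conjTranspose_WH_comm, bellTensor_smul_right,
    ← bellTensor_smul_left, smul_smul, ← AddChar.map_add_eq_mul, add_neg_cancel,
    AddChar.map_zero_eq_one, one_smul, Matrix.smul_mul, bellTensor_mul]

end WeylHeisenberg

theorem Tiso_isometry_intertwines_orthogonal (d : ℕ) [NeZero d] :
    (∀ r s : ZMod d, (Tiso d r s)ᴴ * Tiso d r s = 1) ∧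
    (∀ r s p q : ZMod d,
      (WH d p q ⊗ₖ (WH d p q ⊗ₖ (WH d p q).map (starRingEnd ℂ))) * Tiso d r s =
        Tiso d r s * WH d p q) ∧
    (∀ r s r' s' : ZMod d, (r, s) ≠ (r', s') → (Tiso d r s)ᴴ * Tiso d r' s' = 0) :=
  ⟨conjTranspose_Tiso_mul_self, kronecker_WH_mul_Tiso,
    fun _ _ _ _ => conjTranspose_Tiso_mul_Tiso_of_ne⟩
end

section
/- For every a : ZMod d × ZMod d → ℂ, the double-Bell vector Ψ_a is strongly covariant: (U_{p,q} ⊗ U_{p,q} ⊗ conj(U_{p,q}) ⊗ conj(U_{p,q})) Ψ_a = Ψ_a for all p, q ∈ ZMod d. -/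
open Matrix Kronecker BigOperators

/-- The double-Bell vector `Ψ_a(i,j,k,l) = (1/d) Σ_{r,s} a_{rs} (U_{rs}ᴴ)_{i,l} (U_{rs})_{j,k}`. -/
noncomputable def PsiA (d : ℕ) [NeZero d] (a : ZMod d × ZMod d → ℂ) :
    ZMod d × ZMod d × ZMod d × ZMod d → ℂ :=
  fun x => (d : ℂ)⁻¹ * ∑ r : ZMod d, ∑ s : ZMod d,
    a (r, s) * (WH d r s)ᴴ x.1 x.2.2.2 * WH d r s x.2.1 x.2.2.1

lemma omega_ne_zero (d : ℕ) : omega d ≠ 0 := Complex.exp_ne_zero _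

lemma omega_pow_d (d : ℕ) [NeZero d] : omega d ^ d = 1 := by
  have hd : (d : ℂ) ≠ 0 := Nat.cast_ne_zero.mpr (NeZero.ne d)
  rw [omega, ← Complex.exp_nat_mul]
  rw [show (d : ℂ) * (2 * Real.pi * Complex.I / d) = 2 * Real.pi * Complex.I by field_simp]
  exact Complex.exp_two_pi_mul_I

lemma omega_zpow_congr (d : ℕ) [NeZero d] {m n : ℤ} (h : ((m : ZMod d) = (n : ZMod d))) :
    omega d ^ m = omega d ^ n := by
  have hdvd : (d : ℤ) ∣ m - n := by
    rwa [← ZMod.intCast_zmod_eq_zero_iff_dvd, Int.cast_sub, sub_eq_zero]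
  obtain ⟨c, hc⟩ := hdvd
  have hm : m = n + d * c := by omega
  rw [hm, zpow_add₀ (omega_ne_zero d), _root_.zpow_mul, zpow_natCast, omega_pow_d, _root_.one_zpow, mul_one]

lemma omega_star (d : ℕ) : (starRingEnd ℂ) (omega d) = (omega d)⁻¹ := by
  rw [omega, ← Complex.exp_conj, ← Complex.exp_neg]
  congr 1
  simp [map_div₀, Complex.conj_I, Complex.conj_ofNat]
  ring

lemma star_omega_pow (d : ℕ) (n : ℕ) :
    (starRingEnd ℂ) (omega d ^ n) = omega d ^ (-(n : ℤ)) := by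
  rw [map_pow, omega_star, inv_pow, _root_.zpow_neg, zpow_natCast]

/-- Every double-Bell vector `Ψ_a` is strongly covariant:
`(U_{p,q} ⊗ U_{p,q} ⊗ conj(U_{p,q}) ⊗ conj(U_{p,q})) Ψ_a = Ψ_a`. -/
theorem PsiA_strongly_covariant (d : ℕ) [NeZero d] (a : ZMod d × ZMod d → ℂ) :
    ∀ p q : ZMod d,
      (WH d p q ⊗ₖ (WH d p q ⊗ₖ ((WH d p q).map (starRingEnd ℂ) ⊗ₖ
        (WH d p q).map (starRingEnd ℂ)))).mulVec (PsiA d a) = PsiA d a := by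
  intro p q
  funext x
  obtain ⟨i, j, k, l⟩ := x
  have hiff : ∀ x y : ZMod d, (x = y + p) ↔ y = x - p := fun x y => by
    rw [eq_sub_iff_add_eq, eq_comm]
  simp only [mulVec, dotProduct, Fintype.sum_prod_type, kroneckerMap_apply,
    Matrix.map_apply, WH, hiff, apply_ite (starRingEnd ℂ), map_zero, ite_mul, zero_mul,
    mul_ite, mul_zero, Finset.sum_ite_eq', Finset.mem_univ, if_true]
  simp only [PsiA, conjTranspose_apply, WH]
  rw [mul_left_comm]
  congr 1
  rw [Finset.mul_sum]
  refine Finset.sum_congr rfl fun r _ => ?_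
  rw [Finset.mul_sum]
  refine Finset.sum_congr rfl fun s _ => ?_
  have hc1 : (l - p = i - p + r) = (l = i + r) :=
    propext (by constructor <;> intro h <;> linear_combination h)
  have hc2 : (j - p = k - p + r) = (j = k + r) :=
    propext (by constructor <;> intro h <;> linear_combination h)
  simp only [hc1, hc2]
  by_cases h1 : l = i + r
  · by_cases h2 : j = k + r
    · subst h1 h2
      rw [if_pos rfl, if_pos rfl, if_pos rfl, if_pos rfl]
      have hphase :
          omega d ^ (q.val * (i - p).val) *
            (omega d ^ (q.val * (k + r - p).val) *
              ((starRingEnd ℂ) (omega d ^ (q.val * (k - p).val)) *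
                (starRingEnd ℂ) (omega d ^ (q.val * (i + r - p).val)))) *
          ((starRingEnd ℂ) (omega d ^ (s.val * (i - p).val)) * omega d ^ (s.val * (k - p).val)) =
          (starRingEnd ℂ) (omega d ^ (s.val * i.val)) * omega d ^ (s.val * k.val) := by
        simp only [star_omega_pow]
        simp only [← zpow_natCast (omega d)]
        simp only [← zpow_add₀ (omega_ne_zero d)]
        apply omega_zpow_congr
        push_cast [ZMod.natCast_val, ZMod.cast_id]
        ring
      simp only [Complex.star_def]
      linear_combination a (r, s) * hphase
    · simp [h2]
  · simp [h1]
end
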